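/- Let g be an integer with 1 ≤ n ≤ g, and suppose that for every i with 2 ≤ i ≤ n and every u with 1 ≤ u ≤ g − i the coefficient of t^{2(i+u)−1} in F*_{i,u} vanishes. Then every nonzero element of the ℂ-subalgebra ℂ[f_1, …, f_n] of ℂ⟦t⟧ has t-adic order lying in the hyperelliptic numerical semigroup ⟨2, 2g+1⟩ = {0, 2, 4, 6, …} ∪ {m odd : m ≥ 2g+1}; equivalently, no element of ℂ[f_1, …, f_n] has odd t-adic order strictly less than 2g+1. -/

import Mathlib

/-!
Let `S` be the subalgebra of series that agree modulo `t^(2g+1)` with a polynomial in `f₁`.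
Since `f₁` has order 2, a nonzero polynomial `q(f₁)` has even order `2 · ord_t q`, so every
element of `S` has even order or order at least `2g+1`. It remains to see `f_i ∈ S`. Each step
of the reduction `F*_{i,r}` subtracts a multiple of a power of `f₁`, so `f_i - F*_{i,r}` is a
polynomial in `f₁`; and `F*_{i,g-i+1}` vanishes modulo `t^(2g+1)`: its coefficients below `2i`
vanish as those of `f_i` do, its even coefficients `t^(2(i+u))` were removed by the reduction, and its odd
coefficients `t^(2(i+u)-1)` are already those of `F*_{i,u}`, which vanish by hypothesis.
-/

/-- `Fstar f λ r` is the series `F*_{λ,r}`: `F*_{λ,0} = f_λ = f_{i₁}⋯f_{i_s}` and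
`F*_{λ,r} = F*_{λ,r−1} − a(λ,r−1)·f₁^{i_λ+r−1}`, where `a(λ,r)` is the coefficient
of `t^{2(i_λ+r)}` in `F*_{λ,r}`. -/
noncomputable def Fstar (f : ℕ → PowerSeries ℂ) (lam : List ℕ) : ℕ → PowerSeries ℂ
  | 0 => (lam.map f).prod
  | r + 1 =>
      Fstar f lam r -
        PowerSeries.C (PowerSeries.coeff (2 * (lam.sum + r)) (Fstar f lam r)) *
          f 1 ^ (lam.sum + r)

namespace PowerSeries

variable {R : Type*} [CommRing R]

theorem coeff_pow_of_X_pow_dvd_of_lt {φ : R⟦X⟧} {d k m : ℕ} (h : X ^ d ∣ φ) (hm : m < d * k) :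
    coeff m (φ ^ k) = 0 :=
  X_pow_dvd_iff.mp (pow_mul (X : R⟦X⟧) d k ▸ pow_dvd_pow_of_dvd h k) m hm

theorem coeff_mul_pow_of_X_pow_dvd {φ : R⟦X⟧} {d : ℕ} (h : X ^ d ∣ φ) (k : ℕ) :
    coeff (d * k) (φ ^ k) = coeff d φ ^ k := by
  obtain ⟨ψ, rfl⟩ := h
  rw [mul_pow, ← pow_mul, coeff_X_pow_mul', coeff_X_pow_mul']
  simp

theorem order_eq_of_X_pow_dvd_sub {φ ψ : R⟦X⟧} {N : ℕ} (h : X ^ N ∣ ψ - φ)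
    (hφ : φ.order < N) : ψ.order = φ.order := by
  have hN : (N : ℕ∞) ≤ (ψ - φ).order := nat_le_order _ _ (X_pow_dvd_iff.mp h)
  rw [← add_sub_cancel φ ψ, order_add_of_order_ne _ _ (hφ.trans_le hN).ne,
    min_eq_left (hφ.trans_le hN).le]

theorem constantCoeff_aeval {φ : R⟦X⟧} (hφ : constantCoeff φ = 0) (p : Polynomial R) :
    constantCoeff (Polynomial.aeval φ p) = p.coeff 0 := by
  rw [Polynomial.aeval_def, Polynomial.hom_eval₂, hφ]
  simp [Polynomial.coeff_zero_eq_eval_zero]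

theorem order_aeval [IsDomain R] {φ : R⟦X⟧} (hφ : constantCoeff φ = 0) {q : Polynomial R}
    (hq : q ≠ 0) : (Polynomial.aeval φ q).order = q.natTrailingDegree • φ.order := by
  obtain ⟨p, hqp, hp⟩ := q.exists_eq_pow_rootMultiplicity_mul_and_not_dvd hq 0
  rw [map_zero, sub_zero, Polynomial.rootMultiplicity_eq_natTrailingDegree'] at hqp
  rw [map_zero, sub_zero, Polynomial.X_dvd_iff] at hp
  have hp0 : (Polynomial.aeval φ p).order = 0 := by
    by_contra h
    exact hp ((constantCoeff_aeval hφ p).symm.trans (order_ne_zero_iff_constCoeff_eq_zero.mp h))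
  conv_lhs => rw [hqp]
  rw [map_mul, map_pow, Polynomial.aeval_X, order_mul, order_pow, hp0, add_zero]

/-- The series that agree modulo `X ^ N` with an element of `R[φ]`. -/
noncomputable def adjoinModXPow (φ : R⟦X⟧) (N : ℕ) : Subalgebra R R⟦X⟧ :=
  ((Algebra.adjoin R {φ}).map (Ideal.Quotient.mkₐ R (Ideal.span {X ^ N}))).comap
    (Ideal.Quotient.mkₐ R (Ideal.span {X ^ N}))

theorem mem_adjoinModXPow {φ ψ : R⟦X⟧} {N : ℕ} :
    ψ ∈ adjoinModXPow φ N ↔ ∃ χ ∈ Algebra.adjoin R {φ}, X ^ N ∣ χ - ψ := by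
  simp only [adjoinModXPow, Subalgebra.mem_comap, Subalgebra.mem_map, Ideal.Quotient.mkₐ_eq_mk,
    Ideal.Quotient.eq, Ideal.mem_span_singleton]

theorem self_mem_adjoinModXPow (φ : R⟦X⟧) (N : ℕ) : φ ∈ adjoinModXPow φ N :=
  mem_adjoinModXPow.mpr ⟨φ, Algebra.self_mem_adjoin_singleton R φ, by simp⟩

theorem exists_order_eq_nsmul_of_mem_adjoinModXPow [IsDomain R] {φ ψ : R⟦X⟧} {N : ℕ}
    (hφ : constantCoeff φ = 0) (hψ : ψ ∈ adjoinModXPow φ N) (hlt : ψ.order < N) :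
    ∃ k : ℕ, ψ.order = k • φ.order := by
  obtain ⟨χ, hχ, hdvd⟩ := mem_adjoinModXPow.mp hψ
  rw [Algebra.adjoin_singleton_eq_range_aeval] at hχ
  obtain ⟨q, rfl⟩ := hχ
  have hord : ψ.order = (Polynomial.aeval φ q).order := (order_eq_of_X_pow_dvd_sub hdvd hlt).symm
  rcases eq_or_ne q 0 with rfl | hq
  · rw [map_zero, order_zero] at hord
    exact absurd (hord ▸ hlt) (not_lt.mpr le_top)
  · exact ⟨_, hord.trans (order_aeval hφ hq)⟩

end PowerSeries

section Fstar

open PowerSeries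

variable {f : ℕ → ℂ⟦X⟧}

theorem coeff_Fstar_succ_of_lt (hf1 : X ^ 2 ∣ f 1) {lam : List ℕ} {r m : ℕ}
    (hm : m < 2 * (lam.sum + r)) : coeff m (Fstar f lam (r + 1)) = coeff m (Fstar f lam r) := by
  rw [Fstar, map_sub, coeff_C_mul, coeff_pow_of_X_pow_dvd_of_lt hf1 hm, mul_zero, sub_zero]

theorem coeff_Fstar_of_lt (hf1 : X ^ 2 ∣ f 1) {lam : List ℕ} {u r m : ℕ} (hu : u ≤ r)
    (hm : m < 2 * (lam.sum + u)) : coeff m (Fstar f lam r) = coeff m (Fstar f lam u) := by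
  induction r, hu using Nat.le_induction with
  | base => rfl
  | succ r hur ih => rw [coeff_Fstar_succ_of_lt hf1 (by omega), ih]

theorem coeff_Fstar_succ_self (hf1 : X ^ 2 ∣ f 1) (hf1' : coeff 2 (f 1) = 1) (lam : List ℕ)
    (r : ℕ) : coeff (2 * (lam.sum + r)) (Fstar f lam (r + 1)) = 0 := by
  rw [Fstar, map_sub, coeff_C_mul, coeff_mul_pow_of_X_pow_dvd hf1, hf1', one_pow, mul_one,
    sub_self]

theorem coeff_Fstar_even (hf1 : X ^ 2 ∣ f 1) (hf1' : coeff 2 (f 1) = 1) {lam : List ℕ}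
    {j r : ℕ} (hj : j < r) : coeff (2 * (lam.sum + j)) (Fstar f lam r) = 0 := by
  rw [coeff_Fstar_of_lt hf1 hj (by omega), coeff_Fstar_succ_self hf1 hf1']

theorem prod_sub_Fstar_mem_adjoin (lam : List ℕ) (r : ℕ) :
    (lam.map f).prod - Fstar f lam r ∈ Algebra.adjoin ℂ {f 1} := by
  induction r with
  | zero => simp [Fstar]
  | succ r ih =>
    rw [Fstar, sub_sub_eq_add_sub, add_sub_right_comm]
    refine add_mem ih (mul_mem ?_ (pow_mem (Algebra.self_mem_adjoin_singleton ℂ _) _))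
    rw [← PowerSeries.algebraMap_eq]
    exact Subalgebra.algebraMap_mem _ _

theorem mem_adjoinModXPow_of_coeff_Fstar_odd (hf1 : X ^ 2 ∣ f 1) (hf1' : coeff 2 (f 1) = 1)
    {i g : ℕ} (hi : X ^ (2 * i) ∣ f i)
    (hodd : ∀ u, 1 ≤ u → u ≤ g - i → coeff (2 * (i + u) - 1) (Fstar f [i] u) = 0) :
    f i ∈ adjoinModXPow (f 1) (2 * g + 1) := by
  have hF : X ^ (2 * g + 1) ∣ Fstar f [i] (g - i + 1) := by
    refine X_pow_dvd_iff.mpr fun m hm => ?_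
    obtain hmi | him := lt_or_ge m (2 * i)
    · rw [coeff_Fstar_of_lt hf1 (Nat.zero_le _) (by simpa using hmi)]
      simpa [Fstar] using X_pow_dvd_iff.mp hi m hmi
    obtain ⟨c, rfl | rfl⟩ := Nat.even_or_odd' m
    · simpa [show i + (c - i) = c by omega] using
        coeff_Fstar_even hf1 hf1' (lam := [i]) (j := c - i) (r := g - i + 1) (by omega)
    · rw [coeff_Fstar_of_lt hf1 (u := c + 1 - i) (by omega) (by simp; omega)]
      simpa [show 2 * (i + (c + 1 - i)) - 1 = 2 * c + 1 by omega] using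
        hodd (c + 1 - i) (by omega) (by omega)
  refine mem_adjoinModXPow.mpr ⟨_, prod_sub_Fstar_mem_adjoin [i] (g - i + 1), ?_⟩
  simpa using hF

end Fstar

open PowerSeries in
theorem stmt_12_general (n g : ℕ) (hn : 1 ≤ n) (f : ℕ → PowerSeries ℂ)
    (hlead : ∀ i, 1 ≤ i → i ≤ n → PowerSeries.coeff (2 * i) (f i) = 1)
    (hlow : ∀ i, 1 ≤ i → i ≤ n → ∀ m, m < 2 * i → PowerSeries.coeff m (f i) = 0)
    (hvanish : ∀ i, 2 ≤ i → i ≤ n → ∀ u, 1 ≤ u → u ≤ g - i →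
      PowerSeries.coeff (2 * (i + u) - 1) (Fstar f [i] u) = 0) :
    ∀ F ∈ Algebra.adjoin ℂ (f '' Set.Icc 1 n), F ≠ 0 →
      ∃ m : ℕ, PowerSeries.order F = m ∧ (Even m ∨ 2 * g + 1 ≤ m) := by
  have hf1 : X ^ 2 ∣ f 1 := X_pow_dvd_iff.mpr (hlow 1 le_rfl hn)
  have hf1' : coeff 2 (f 1) = 1 := hlead 1 le_rfl hn
  have hord : (f 1).order = 2 := order_eq_nat.mpr ⟨by simp [hf1'], hlow 1 le_rfl hn⟩
  have hgen : Algebra.adjoin ℂ (f '' Set.Icc 1 n) ≤ adjoinModXPow (f 1) (2 * g + 1) := by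
    refine Algebra.adjoin_le ?_
    rintro _ ⟨i, ⟨hi1, hin⟩, rfl⟩
    obtain rfl | hi2 := hi1.eq_or_lt
    · exact self_mem_adjoinModXPow _ _
    · exact mem_adjoinModXPow_of_coeff_Fstar_odd hf1 hf1'
        (X_pow_dvd_iff.mpr (hlow i hi1 hin)) (hvanish i hi2 hin)
  intro F hF hF0
  obtain ⟨m, hm⟩ := ENat.ne_top_iff_exists.mp (mt order_eq_top.mp hF0)
  refine ⟨m, hm.symm, or_iff_not_imp_right.mpr fun hlt => ?_⟩
  obtain ⟨k, hk⟩ := exists_order_eq_nsmul_of_mem_adjoinModXPow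
    (order_ne_zero_iff_constCoeff_eq_zero.mp (by simp [hord])) (hgen hF)
    (hm ▸ by exact_mod_cast not_le.mp hlt)
  rw [← hm, hord, nsmul_eq_mul] at hk
  exact ⟨k, by norm_cast at hk; omega⟩

/-- if `1 ≤ n ≤ g` and the coefficient of `t^{2(i+u)−1}` in `F*_{i,u}`
vanishes for all `2 ≤ i ≤ n` and `1 ≤ u ≤ g − i`, then every nonzero element of the
`ℂ`-subalgebra `ℂ[f₁,…,f_n] ⊆ ℂ⟦t⟧` has `t`-adic order lying in the hyperelliptic
numerical semigroup `⟨2, 2g+1⟩`, i.e. its order is even or at least `2g+1` (so no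
element has odd order strictly less than `2g+1`). -/
theorem stmt_12 (n g : ℕ) (hn : 1 ≤ n) (hng : n ≤ g) (f : ℕ → PowerSeries ℂ)
    (hlead : ∀ i, 1 ≤ i → i ≤ n → PowerSeries.coeff (2 * i) (f i) = 1)
    (hlow : ∀ i, 1 ≤ i → i ≤ n → ∀ m, m < 2 * i → PowerSeries.coeff m (f i) = 0)
    (hvanish : ∀ i, 2 ≤ i → i ≤ n → ∀ u, 1 ≤ u → u ≤ g - i →
      PowerSeries.coeff (2 * (i + u) - 1) (Fstar f [i] u) = 0) :
    ∀ F ∈ Algebra.adjoin ℂ (f '' Set.Icc 1 n), F ≠ 0 →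
      ∃ m : ℕ, PowerSeries.order F = m ∧ (Even m ∨ 2 * g + 1 ≤ m) :=
  stmt_12_general n g hn f hlead hlow hvanish
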